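/- arXiv:1912.08744 — 3 statements merged into one kernel-verified Lean document; each statement's English description precedes it below -/
import Mathlib

section
/- Let A be a real m×n matrix with columns α₁ᵀ,…,αₙᵀ, β ∈ ℝ^m, ε ≥ 0, and y ∈ ℝⁿ. If H : (ℝ_{>0})ⁿ → [1−τ, 1+τ] with 0 < τ < 1, (1+τ)/(1−τ) ≤ 1+ε, and A yᵀ = βᵀ, then F(v) := H(v)·v^y belongs to S(A,β,ε), i.e. |F(v₁c^{α₁},…,vₙc^{αₙ}) − F(v)·c^β| ≤ ε·|F(v)|·c^β for all v ∈ (ℝ_{>0})ⁿ and c ∈ (ℝ_{>0})^m. -/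
/-- `v^y := ∏ i, v i ^ y i` (real powers). -/
noncomputable def ppow {ι : Type*} [Fintype ι] (v y : ι → ℝ) : ℝ := ∏ i, v i ^ y i

/-- The scaled vector `(v₁c^{α₁}, …, vₙc^{αₙ})`, where `αⱼᵀ` are the columns of `A`
and `c^α := ∏ i, c i ^ α i`. -/
noncomputable def scale {m n : ℕ} (A : Matrix (Fin m) (Fin n) ℝ) (c : Fin m → ℝ)
    (v : Fin n → ℝ) : Fin n → ℝ := fun j => v j * ppow c (fun i => A i j)

/-- `F ∈ S(A,β,ε)`: `|F(v₁c^{α₁},…,vₙc^{αₙ}) − F(v)c^β| ≤ ε|F(v)|c^β` for all positive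
`v ∈ ℝⁿ`, `c ∈ ℝ^m`. `S(A,β) := S(A,β,0)`. -/
def memS {m n : ℕ} (A : Matrix (Fin m) (Fin n) ℝ) (β : Fin m → ℝ) (ε : ℝ)
    (F : (Fin n → ℝ) → ℝ) : Prop :=
  ∀ v : Fin n → ℝ, (∀ j, 0 < v j) → ∀ c : Fin m → ℝ, (∀ i, 0 < c i) →
    |F (scale A c v) - F v * ppow c β| ≤ ε * |F v| * ppow c β

lemma ppow_pos {ι : Type*} [Fintype ι] {v : ι → ℝ} (hv : ∀ i, 0 < v i) (y : ι → ℝ) :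
    0 < ppow v y :=
  Finset.prod_pos fun i _ => Real.rpow_pos_of_pos (hv i) _

lemma ppow_scale {m n : ℕ} (A : Matrix (Fin m) (Fin n) ℝ) {c : Fin m → ℝ}
    (hc : ∀ i, 0 < c i) {v : Fin n → ℝ} (hv : ∀ j, 0 < v j) (y : Fin n → ℝ) :
    ppow (scale A c v) y = ppow v y * ppow c (A.mulVec y) := by
  unfold ppow scale
  have step : ∀ j : Fin n, (v j * ppow c fun i => A i j) ^ y j
      = v j ^ y j * (ppow c fun i => A i j) ^ y j := fun j =>
    Real.mul_rpow (hv j).le (Finset.prod_nonneg fun i _ => (Real.rpow_pos_of_pos (hc i) _).le)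
  simp_rw [step]
  rw [Finset.prod_mul_distrib]
  congr 1
  have key : ∀ i : Fin m, c i ^ (A.mulVec y) i = ∏ j : Fin n, c i ^ (A i j * y j) := by
    intro i
    rw [Matrix.mulVec, dotProduct, Real.rpow_sum_of_pos (hc i)]
  simp_rw [key]
  rw [Finset.prod_comm]
  refine Finset.prod_congr rfl fun j _ => ?_
  unfold ppow
  rw [← Real.finset_prod_rpow _ _ (fun i _ => (Real.rpow_pos_of_pos (hc i) _).le)]
  refine Finset.prod_congr rfl fun i _ => ?_
  rw [← Real.rpow_mul (hc i).le]

/-- If `H : (ℝ_{>0})ⁿ → [1−τ, 1+τ]` with `0 < τ < 1`, `(1+τ)/(1−τ) ≤ 1+ε` and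
`Ayᵀ = βᵀ`, then `F(v) := H(v)·v^y` belongs to `S(A,β,ε)`. -/
theorem bounded_factor_mem_S_eps (m n : ℕ) (A : Matrix (Fin m) (Fin n) ℝ)
    (β : Fin m → ℝ) (ε τ : ℝ) (hτ0 : 0 < τ) (hτ1 : τ < 1)
    (hτε : (1 + τ) / (1 - τ) ≤ 1 + ε)
    (y : Fin n → ℝ) (hy : A.mulVec y = β)
    (H : (Fin n → ℝ) → ℝ)
    (hH : ∀ v : Fin n → ℝ, (∀ j, 0 < v j) → H v ∈ Set.Icc (1 - τ) (1 + τ))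
    (F : (Fin n → ℝ) → ℝ) (hF : ∀ v, F v = H v * ppow v y) :
    memS A β ε F := by
  intro v hv c hc
  have hsv : ∀ j, 0 < scale A c v j := fun j =>
    mul_pos (hv j) (ppow_pos hc _)
  have hvy : 0 < ppow v y := ppow_pos hv y
  have hcβ : 0 < ppow c β := ppow_pos hc β
  have h1 := hH v hv
  have h2 := hH _ hsv
  have hdiv := (div_le_iff₀ (by linarith : (0:ℝ) < 1 - τ)).mp hτε
  have hεpos : 0 ≤ ε := by nlinarith
  rw [hF, hF, ppow_scale A hc hv, hy]
  have e : H (scale A c v) * (ppow v y * ppow c β) - H v * ppow v y * ppow c β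
      = (H (scale A c v) - H v) * (ppow v y * ppow c β) := by ring
  rw [e, abs_mul, abs_of_pos (mul_pos hvy hcβ), abs_mul, abs_of_pos hvy]
  rw [show ε * (|H v| * ppow v y) * ppow c β = ε * |H v| * (ppow v y * ppow c β) from by ring]
  refine mul_le_mul_of_nonneg_right ?_ (mul_pos hvy hcβ).le
  have hHv : 0 < H v := lt_of_lt_of_le (by linarith) h1.1
  rw [abs_of_pos hHv]
  have h2τ : 2 * τ ≤ ε * (1 - τ) := by nlinarith
  have : |H (scale A c v) - H v| ≤ 2 * τ := by
    rw [abs_le]; constructor <;> [linarith [h2.1, h1.2]; linarith [h2.2, h1.1]]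
  calc |H (scale A c v) - H v| ≤ 2 * τ := this
    _ ≤ ε * (1 - τ) := h2τ
    _ ≤ ε * H v := by nlinarith [h1.1]
end

section
/- Let A be a real m×n matrix of rank n with columns α₁ᵀ,…,αₙᵀ, β ∈ ℝ^m, y ∈ ℝⁿ with Ayᵀ = βᵀ, and F : (ℝ_{>0})ⁿ → ℝ satisfying F(v₁c^{α₁},…,vₙc^{αₙ}) = F(v)·c^β for all v ∈ (ℝ_{>0})ⁿ and c ∈ (ℝ_{>0})^m. Then F(v) = C·v^y for all v ∈ (ℝ_{>0})ⁿ, where C := F(1,…,1). -/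
/-! Since `Aᵀ` is onto, every positive `v` is `v = (1,…,1)` scaled by `c = exp u` for some `u` with
`Aᵀu = log v`. Homogeneity then gives `F v = F(1,…,1) · c^β`, and
`log c^β = u ⬝ Ay = Aᵀu ⬝ y = log v ⬝ y`. -/

open Real Matrix

theorem Matrix.mulVec_surjective_of_rank_eq_card {K m n : Type*} [Field K] [Fintype m]
    [Fintype n] {A : Matrix m n K} (hA : A.rank = Fintype.card m) :
    Function.Surjective A.mulVec := by
  refine (LinearMap.range_eq_top (f := A.mulVecLin)).mp (Submodule.eq_top_of_finrank_eq ?_)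
  rw [← Matrix.rank, hA, Module.finrank_fintype_fun_eq_card]

theorem Matrix.vecMul_surjective_of_rank_eq_card {K m n : Type*} [Field K] [Fintype m]
    [Fintype n] {A : Matrix m n K} (hA : A.rank = Fintype.card n) :
    Function.Surjective (· ᵥ* A) := by
  have h := mulVec_surjective_of_rank_eq_card (A := Aᵀ) (by rwa [rank_transpose])
  exact fun w => (h w).imp fun u hu => (mulVec_transpose A u).symm.trans hu

theorem ppow_eq_exp_dotProduct_log {ι : Type*} [Fintype ι] {v : ι → ℝ} (hv : ∀ i, 0 < v i)
    (y : ι → ℝ) : ppow v y = exp ((fun i => log (v i)) ⬝ᵥ y) := by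
  simp only [ppow, dotProduct, exp_sum, rpow_def_of_pos (hv _)]

theorem ppow_exp {ι : Type*} [Fintype ι] (u y : ι → ℝ) :
    ppow (fun i => exp (u i)) y = exp (u ⬝ᵥ y) := by
  simp only [ppow_eq_exp_dotProduct_log fun i => exp_pos (u i), log_exp]

theorem scale_exp_one {m n : ℕ} (A : Matrix (Fin m) (Fin n) ℝ) (u : Fin m → ℝ) :
    scale A (fun i => exp (u i)) (fun _ => 1) = fun j => exp ((u ᵥ* A) j) := by
  funext j
  rw [scale, one_mul, ppow_exp]
  rfl

/-- Classical Buckingham theorem, full column-rank case: if `rank A = n`, `Ayᵀ = βᵀ`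
and `F ∈ S(A,β)`, then `F(v) = C·v^y` with `C := F(1,…,1)`. -/
theorem buckingham_full_rank (m n : ℕ) (A : Matrix (Fin m) (Fin n) ℝ)
    (hrank : A.rank = n) (β : Fin m → ℝ) (y : Fin n → ℝ) (hy : A.mulVec y = β)
    (F : (Fin n → ℝ) → ℝ)
    (hF : ∀ v : Fin n → ℝ, (∀ j, 0 < v j) → ∀ c : Fin m → ℝ, (∀ i, 0 < c i) →
      F (scale A c v) = F v * ppow c β) :
    ∀ v : Fin n → ℝ, (∀ j, 0 < v j) → F v = F (fun _ => 1) * ppow v y := by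
  intro v hv
  obtain ⟨u, hu : u ᵥ* A = fun j => log (v j)⟩ :=
    vecMul_surjective_of_rank_eq_card (by rwa [Fintype.card_fin]) fun j => log (v j)
  have hscale : scale A (fun i => exp (u i)) (fun _ => 1) = v := by
    rw [scale_exp_one, hu]
    exact funext fun j => exp_log (hv j)
  have hF_v := hF (fun _ => 1) (fun _ => one_pos) _ (fun i => exp_pos (u i))
  rw [hscale, ppow_exp, ← hy, dotProduct_mulVec, hu] at hF_v
  rw [hF_v, ppow_eq_exp_dotProduct_log hv]
end

section
/- Quantitative Buckingham theorem, full-rank case: Let A be a real m×n matrix with rank(A) = n and columns α₁ᵀ,…,αₙᵀ, let β ∈ ℝ^m, ε ≥ 0, and F ∈ S(A,β,ε). Let y ∈ ℝⁿ and δ ≥ 0 with ‖Ayᵀ − βᵀ‖_∞ ≤ δ. Put C := F(1,…,1), D := (Aᵀ)† (Moore–Penrose pseudoinverse), and fix K > 1. If v ∈ (ℝ_{>0})ⁿ satisfies K⁻¹ ≤ v_i ≤ K for all i, then |F(v) − C·v^y| ≤ |F(v)|·((1+ε)·K^{mδ‖D‖} − 1). -/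
open Matrix

/-! Taking logarithms turns the scaling `v ↦ (v_j c^{α_j})_j` into the translation
`log v ↦ log v + Aᵀ log c`. Since `Aᵀ` has full row rank, its pseudoinverse is a right inverse,
so `w := D log v` solves `Aᵀ w = log v`, and the scaling by `c := exp (-w)` sends `v` to
`(1, …, 1)`. The defining inequality of `S(A,β,ε)` at this `c` compares `F v` with `F (1, …, 1)`,
and the mismatch `c^β v^y = exp (w ⬝ᵥ (A y - β))` is controlled by `‖A y - β‖_∞ ≤ δ` and
`‖w‖_∞ ≤ ‖D‖ log K`. -/

namespace Matrix

variable {K m n : Type*} [Field K] [Fintype m] [Fintype n]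

theorem mulVec_surjective_of_rank_eq_card_s9 {A : Matrix m n K} (hA : A.rank = Fintype.card m) :
    Function.Surjective A.mulVec := by
  have hrange : LinearMap.range A.mulVecLin = ⊤ :=
    Submodule.eq_top_of_finrank_eq (by rw [← Matrix.rank, hA, Module.finrank_fintype_fun_eq_card])
  exact LinearMap.range_eq_top.mp hrange

theorem mul_eq_one_of_mul_mul_eq_self [DecidableEq m] {A : Matrix m n K}
    (hA : A.rank = Fintype.card m) {G : Matrix n m K} (h : A * G * A = A) : A * G = 1 := by
  refine ext_iff_mulVec.mpr fun z => ?_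
  obtain ⟨x, rfl⟩ := mulVec_surjective_of_rank_eq_card_s9 hA z
  rw [mulVec_mulVec, h, one_mulVec]

end Matrix

section Estimates

variable {ι κ : Type*} [Fintype ι] [Fintype κ]

theorem abs_dotProduct_le {a b : ι → ℝ} {α β : ℝ} (ha : ∀ i, |a i| ≤ α) (hb : ∀ i, |b i| ≤ β) :
    |a ⬝ᵥ b| ≤ Fintype.card ι * α * β := by
  calc |a ⬝ᵥ b| ≤ ∑ i, |a i * b i| := Finset.abs_sum_le_sum_abs _ _
    _ ≤ ∑ _i : ι, α * β := Finset.sum_le_sum fun i _ => by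
        rw [abs_mul]
        exact mul_le_mul (ha i) (hb i) (abs_nonneg _) ((abs_nonneg _).trans (ha i))
    _ = Fintype.card ι * α * β := by
        rw [Finset.sum_const, Finset.card_univ, nsmul_eq_mul, mul_assoc]

theorem abs_mulVec_apply_le (D : Matrix ι κ ℝ) {x : κ → ℝ} {η : ℝ} (hη : 0 ≤ η)
    (hx : ∀ j, |x j| ≤ η) (i : ι) : |(D *ᵥ x) i| ≤ (⨆ i, ∑ j, |D i j|) * η := by
  calc |(D *ᵥ x) i| ≤ ∑ j, |D i j * x j| := Finset.abs_sum_le_sum_abs _ _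
    _ ≤ ∑ j, |D i j| * η := Finset.sum_le_sum fun j _ => by
        rw [abs_mul]
        exact mul_le_mul_of_nonneg_left (hx j) (abs_nonneg _)
    _ = (∑ j, |D i j|) * η := (Finset.sum_mul _ _ _).symm
    _ ≤ (⨆ i, ∑ j, |D i j|) * η := by
        gcongr
        exact le_ciSup (Set.finite_range fun i => ∑ j, |D i j|).bddAbove i

end Estimates

theorem Real.abs_log_le_log_of_inv_le_of_le {x K : ℝ} (hK : 0 < K) (h₁ : K⁻¹ ≤ x) (h₂ : x ≤ K) :
    |Real.log x| ≤ Real.log K := by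
  have hx : 0 < x := (inv_pos.mpr hK).trans_le h₁
  refine abs_le.mpr ⟨?_, Real.log_le_log hx h₂⟩
  rw [← Real.log_inv]
  exact Real.log_le_log (inv_pos.mpr hK) h₁

theorem Real.abs_one_sub_exp_add_mul_exp_le {t r ε : ℝ} (hε : 0 ≤ ε) (ht : |t| ≤ r) :
    |1 - Real.exp t| + ε * Real.exp t ≤ (1 + ε) * Real.exp r - 1 := by
  have hup : Real.exp t ≤ Real.exp r := Real.exp_le_exp.mpr (le_abs_self t |>.trans ht)
  have hlow : Real.exp (-r) ≤ Real.exp t := Real.exp_le_exp.mpr (neg_le_of_abs_le ht)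
  have hsum : 2 ≤ Real.exp r + Real.exp (-r) := by
    linarith [Real.add_one_le_exp r, Real.add_one_le_exp (-r)]
  rcases abs_cases (1 - Real.exp t) with ⟨h, _⟩ | ⟨h, _⟩ <;> rw [h] <;>
    nlinarith [mul_nonneg hε (sub_nonneg.mpr hup)]

theorem abs_sub_mul_le_of_abs_sub_mul_le {a b p q ε : ℝ} (hq : 0 < q)
    (h : |b - a * p| ≤ ε * |a| * p) : |a - b * q| ≤ |a| * (|1 - q * p| + ε * (q * p)) := by
  calc |a - b * q| = |a * (1 - q * p) + (a * p - b) * q| := by ring_nf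
    _ ≤ |a| * |1 - q * p| + |b - a * p| * q := by
        refine (abs_add_le _ _).trans_eq ?_
        rw [abs_mul, abs_mul, abs_sub_comm (a * p), abs_of_pos hq]
    _ ≤ |a| * |1 - q * p| + ε * |a| * p * q := by gcongr
    _ = |a| * (|1 - q * p| + ε * (q * p)) := by ring

section ExpCoordinates

variable {m n : ℕ}

theorem ppow_eq_exp_dotProduct {ι : Type*} [Fintype ι] {v : ι → ℝ} (hv : ∀ i, 0 < v i)
    (y : ι → ℝ) : ppow v y = Real.exp ((Real.log ∘ v) ⬝ᵥ y) := by
  simp only [ppow, dotProduct, Real.exp_sum, Function.comp_apply, Real.rpow_def_of_pos (hv _)]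

theorem ppow_exp_neg {ι : Type*} [Fintype ι] (w y : ι → ℝ) :
    ppow (fun i => Real.exp (-w i)) y = Real.exp (-(w ⬝ᵥ y)) := by
  rw [ppow_eq_exp_dotProduct fun i => Real.exp_pos _]
  simp [dotProduct]

variable {A : Matrix (Fin m) (Fin n) ℝ} {v : Fin n → ℝ} {w : Fin m → ℝ}

theorem scale_exp_neg_eq_one (hv : ∀ j, 0 < v j) (hw : Aᵀ *ᵥ w = Real.log ∘ v) :
    scale A (fun i => Real.exp (-w i)) v = fun _ => 1 := by
  funext j
  have hj : w ⬝ᵥ (fun i => A i j) = Real.log (v j) := by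
    rw [dotProduct_comm]
    exact congrFun hw j
  rw [scale, ppow_exp_neg, hj, Real.exp_neg, Real.exp_log (hv j), mul_inv_cancel₀ (hv j).ne']

theorem ppow_mul_ppow_exp_neg (hv : ∀ j, 0 < v j) (hw : Aᵀ *ᵥ w = Real.log ∘ v)
    (y : Fin n → ℝ) (β : Fin m → ℝ) :
    ppow v y * ppow (fun i => Real.exp (-w i)) β = Real.exp (w ⬝ᵥ (A *ᵥ y - β)) := by
  rw [ppow_eq_exp_dotProduct hv, ← hw, ppow_exp_neg, ← Real.exp_add, mulVec_transpose,
    ← dotProduct_mulVec, dotProduct_sub, sub_eq_add_neg]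

theorem memS.abs_sub_mul_ppow_le {β : Fin m → ℝ} {ε : ℝ} {F : (Fin n → ℝ) → ℝ}
    (hF : memS A β ε F) (hv : ∀ j, 0 < v j) (hw : Aᵀ *ᵥ w = Real.log ∘ v) (y : Fin n → ℝ) :
    |F v - F (fun _ => 1) * ppow v y| ≤
      |F v| * (|1 - Real.exp (w ⬝ᵥ (A *ᵥ y - β))| + ε * Real.exp (w ⬝ᵥ (A *ᵥ y - β))) := by
  have hmem := hF v hv (fun i => Real.exp (-w i)) fun i => Real.exp_pos _
  rw [scale_exp_neg_eq_one hv hw] at hmem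
  rw [← ppow_mul_ppow_exp_neg hv hw]
  exact abs_sub_mul_le_of_abs_sub_mul_le (by rw [ppow_eq_exp_dotProduct hv]; positivity) hmem

end ExpCoordinates

theorem quantitative_buckingham_full_rank_general (m n : ℕ) (A : Matrix (Fin m) (Fin n) ℝ)
    (hrank : A.rank = n) (β : Fin m → ℝ) (ε : ℝ) (hε : 0 ≤ ε)
    (F : (Fin n → ℝ) → ℝ) (hF : memS A β ε F)
    (y : Fin n → ℝ) (δ : ℝ) (hy : ∀ i, |A.mulVec y i - β i| ≤ δ)
    (D : Matrix (Fin m) (Fin n) ℝ)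
    (hD1 : Aᵀ * D * Aᵀ = Aᵀ)
    (K : ℝ) (hK : 1 < K)
    (v : Fin n → ℝ) (hv : ∀ i, K⁻¹ ≤ v i ∧ v i ≤ K) :
    |F v - F (fun _ => 1) * ppow v y| ≤
      |F v| * ((1 + ε) * K ^ ((m : ℝ) * δ * (⨆ i, ∑ j, |D i j|)) - 1) := by
  have hK0 : 0 < K := one_pos.trans hK
  have hv0 : ∀ j, 0 < v j := fun j => (inv_pos.mpr hK0).trans_le (hv j).1
  have hAD : Aᵀ * D = 1 :=
    mul_eq_one_of_mul_mul_eq_self (by rw [rank_transpose, hrank, Fintype.card_fin]) hD1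
  set w := D *ᵥ (Real.log ∘ v)
  have hw : Aᵀ *ᵥ w = Real.log ∘ v := by rw [mulVec_mulVec, hAD, one_mulVec]
  have hwK : ∀ i, |w i| ≤ (⨆ i, ∑ j, |D i j|) * Real.log K :=
    abs_mulVec_apply_le D (Real.log_nonneg hK.le) fun j =>
      Real.abs_log_le_log_of_inv_le_of_le hK0 (hv j).1 (hv j).2
  have ht : |w ⬝ᵥ (A *ᵥ y - β)| ≤ Real.log K * ((m : ℝ) * δ * ⨆ i, ∑ j, |D i j|) := by
    refine (abs_dotProduct_le hwK hy).trans_eq ?_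
    rw [Fintype.card_fin]
    ring
  calc |F v - F (fun _ => 1) * ppow v y|
      ≤ |F v| * (|1 - Real.exp (w ⬝ᵥ (A *ᵥ y - β))| + ε * Real.exp (w ⬝ᵥ (A *ᵥ y - β))) :=
        hF.abs_sub_mul_ppow_le hv0 hw y
    _ ≤ _ := by
        rw [Real.rpow_def_of_pos hK0]
        gcongr
        exact Real.abs_one_sub_exp_add_mul_exp_le hε ht

/-- Quantitative Buckingham theorem, full column-rank case. `D` is the Moore–Penrose
pseudoinverse of `Aᵀ` (characterized by the four Penrose equations) and
`‖D‖ = ⨆ i, ∑ j, |D i j|` is the operator norm induced by the max-norms. -/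
theorem quantitative_buckingham_full_rank (m n : ℕ) (A : Matrix (Fin m) (Fin n) ℝ)
    (hrank : A.rank = n) (β : Fin m → ℝ) (ε : ℝ) (hε : 0 ≤ ε)
    (F : (Fin n → ℝ) → ℝ) (hF : memS A β ε F)
    (y : Fin n → ℝ) (δ : ℝ) (hδ : 0 ≤ δ) (hy : ∀ i, |A.mulVec y i - β i| ≤ δ)
    (D : Matrix (Fin m) (Fin n) ℝ)
    (hD1 : Aᵀ * D * Aᵀ = Aᵀ) (hD2 : D * Aᵀ * D = D)
    (hD3 : (Aᵀ * D)ᵀ = Aᵀ * D) (hD4 : (D * Aᵀ)ᵀ = D * Aᵀ)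
    (K : ℝ) (hK : 1 < K)
    (v : Fin n → ℝ) (hv : ∀ i, K⁻¹ ≤ v i ∧ v i ≤ K) :
    |F v - F (fun _ => 1) * ppow v y| ≤
      |F v| * ((1 + ε) * K ^ ((m : ℝ) * δ * (⨆ i, ∑ j, |D i j|)) - 1) :=
  quantitative_buckingham_full_rank_general m n A hrank β ε hε F hF y δ hy D hD1 K hK v hv
end
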